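/- arXiv:1311.7050 — 3 statements merged into one kernel-verified Lean document; each statement's English description precedes it below -/
import Mathlib

section
/- (Lemma 4.2, monotonicity of Λ along entire solutions.) Let U be a bounded nonnegative entire solution of the symmetric parabolic problem U_t = Δ U + g(t, x, U, ∇U) in Ω × ℝ, U = 0 on ∂Ω × ℝ, with g independent of x_1, even in p_1, and Lipschitz in (u, p). Then the function t ↦ Λ(U(·, t)) is nonincreasing on ℝ. -/
/-!
For `μ > 0` let `w(x, r) = U(P_μ x, r) - U(x, r)` on the cap `Ω_μ`. It vanishes on the hyperplane
`x₁ = μ`, and on `∂Ω` it equals `U(P_μ x, r) ≥ 0`, since symmetry and convexity in `x₁` make `P_μ`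
map the cap into `Ω`. At a spatial minimum of `w` the gradients of `U` at `x` and `P_μ x` agree up
to the sign of the first component; as `g` does not depend on `x₁` and is even in `p₁`, the equation
gives `w_t ≥ Δw - β0 |w|` there, and `Δw ≥ 0`, so `w_t ≥ β0 w` if `w < 0`. Hence
`e^{-(β0 + 1) r} w` cannot attain a negative minimum over `cl Ω_μ × [s, t]` at a time after `s`,
so `w ≥ 0` at time `s` persists to time `t`. Every `λ` admissible in the infimum defining
`Λ(U(·, s))` is therefore admissible for `Λ(U(·, t))`.
-/

open Set Filter MeasureTheory Real

noncomputable section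

/-- Reflection `P_λ` about the hyperplane `x 0 = lam`. -/
def reflHyp (N : ℕ) [NeZero N] (lam : ℝ) (x : Fin N → ℝ) : Fin N → ℝ :=
  Function.update x 0 (2 * lam - x 0)

/-- The cap `Ω_λ = {x ∈ Ω : x 0 > λ}`. -/
def capSet {N : ℕ} [NeZero N] (Ω : Set (Fin N → ℝ)) (lam : ℝ) : Set (Fin N → ℝ) :=
  {x ∈ Ω | lam < x 0}

/-- `ℓ = sup {λ : Ω ∩ H_λ ≠ ∅}`, i.e. the supremum of the first coordinate on `Ω`. -/
def ellOf {N : ℕ} [NeZero N] (Ω : Set (Fin N → ℝ)) : ℝ :=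
  sSup ((fun x => x 0) '' Ω)

/-- The moving-plane functional
`Λ(z) = inf {λ ∈ (0, ℓ] : V_μ z ≥ 0 on Ω_μ for all μ > λ}`. -/
def bigLambda {N : ℕ} [NeZero N] (Ω : Set (Fin N → ℝ)) (z : (Fin N → ℝ) → ℝ) : ℝ :=
  sInf {lam | lam ∈ Ioc 0 (ellOf Ω) ∧
    ∀ μ : ℝ, lam < μ → ∀ x ∈ capSet Ω μ, 0 ≤ z (reflHyp N μ x) - z x}

/-- Partial derivative in the `i`-th coordinate direction. -/
def pd {N : ℕ} (i : Fin N) (f : (Fin N → ℝ) → ℝ) (x : Fin N → ℝ) : ℝ :=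
  fderiv ℝ f x (Pi.single i 1)

/-- The Laplacian, as the sum of second partial derivatives. -/
def lapl {N : ℕ} (f : (Fin N → ℝ) → ℝ) (x : Fin N → ℝ) : ℝ :=
  ∑ i, pd i (pd i f) x

open Topology

section PartialDerivative

variable {N : ℕ}

lemma Filter.EventuallyEq.pd_eq {f g : (Fin N → ℝ) → ℝ} {x : Fin N → ℝ} (h : f =ᶠ[𝓝 x] g)
    (i : Fin N) : pd i f x = pd i g x := by
  rw [pd, pd, h.fderiv_eq]

lemma pd_sub {f g : (Fin N → ℝ) → ℝ} {x : Fin N → ℝ} (hf : DifferentiableAt ℝ f x)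
    (hg : DifferentiableAt ℝ g x) (i : Fin N) :
    pd i (fun y => f y - g y) x = pd i f x - pd i g x := by
  rw [pd, fderiv_fun_sub hf hg]; rfl

lemma pd_const_mul {f : (Fin N → ℝ) → ℝ} {x : Fin N → ℝ} (c : ℝ)
    (hf : DifferentiableAt ℝ f x) (i : Fin N) :
    pd i (fun y => c * f y) x = c * pd i f x := by
  rw [pd, fderiv_const_mul hf]; rfl

lemma differentiableAt_pd {f : (Fin N → ℝ) → ℝ} {x : Fin N → ℝ}
    (hf : ContDiffAt ℝ 2 f x) (i : Fin N) : DifferentiableAt ℝ (pd i f) x :=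
  (ContinuousLinearMap.apply ℝ ℝ (Pi.single i 1 : Fin N → ℝ)).differentiableAt.comp x
    ((hf.fderiv_right (m := 1) (by norm_num)).differentiableAt one_ne_zero)

lemma lapl_sub {f g : (Fin N → ℝ) → ℝ} {x : Fin N → ℝ} (hf : ContDiffAt ℝ 2 f x)
    (hg : ContDiffAt ℝ 2 g x) : lapl (fun y => f y - g y) x = lapl f x - lapl g x := by
  rw [lapl, lapl, lapl, ← Finset.sum_sub_distrib]
  refine Finset.sum_congr rfl fun i _ => ?_
  have hpd : pd i (fun y => f y - g y) =ᶠ[𝓝 x] fun y => pd i f y - pd i g y := by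
    filter_upwards [hf.eventually (by simp), hg.eventually (by simp)] with y hfy hgy
    exact pd_sub (hfy.differentiableAt two_ne_zero) (hgy.differentiableAt two_ne_zero) i
  rw [hpd.pd_eq, pd_sub (differentiableAt_pd hf i) (differentiableAt_pd hg i)]

end PartialDerivative

section Reflection

variable {N : ℕ} [NeZero N]

def reflCLM (N : ℕ) [NeZero N] : (Fin N → ℝ) →L[ℝ] (Fin N → ℝ) :=
  ContinuousLinearMap.id ℝ _ -
    (ContinuousLinearMap.proj 0).smulRight (2 • Pi.single (0 : Fin N) (1 : ℝ))

lemma reflHyp_apply_zero (lam : ℝ) (x : Fin N → ℝ) : reflHyp N lam x 0 = 2 * lam - x 0 := by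
  simp [reflHyp]

lemma reflHyp_apply_of_ne (lam : ℝ) (x : Fin N → ℝ) {j : Fin N} (hj : j ≠ 0) :
    reflHyp N lam x j = x j := by
  simp [reflHyp, hj]

lemma reflHyp_eq_self {lam : ℝ} {x : Fin N → ℝ} (h : x 0 = lam) : reflHyp N lam x = x := by
  rw [reflHyp, ← h, show 2 * x 0 - x 0 = x 0 by ring, Function.update_eq_self]

lemma reflHyp_eq_reflCLM_add (lam : ℝ) :
    reflHyp N lam = fun x => reflCLM N x + (2 * lam) • Pi.single 0 1 := by
  funext x j
  rcases eq_or_ne j 0 with rfl | hj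
  · simp [reflHyp_apply_zero, reflCLM]; ring
  · simp [reflHyp_apply_of_ne _ _ hj, reflCLM, hj]

lemma hasFDerivAt_reflHyp (lam : ℝ) (x : Fin N → ℝ) :
    HasFDerivAt (reflHyp N lam) (reflCLM N) x := by
  rw [reflHyp_eq_reflCLM_add]
  exact (reflCLM N).hasFDerivAt.add_const _

lemma contDiff_reflHyp (lam : ℝ) : ContDiff ℝ 2 (reflHyp N lam) := by
  rw [reflHyp_eq_reflCLM_add]
  exact (reflCLM N).contDiff.add contDiff_const

lemma continuous_reflHyp (lam : ℝ) : Continuous (reflHyp N lam) :=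
  (contDiff_reflHyp lam).continuous

lemma reflCLM_single (i : Fin N) :
    reflCLM N (Pi.single i 1) = (if i = 0 then -1 else 1 : ℝ) • Pi.single i 1 := by
  funext j
  by_cases hi : i = 0 <;> by_cases hj : j = 0 <;> subst_vars <;>
    norm_num [reflCLM, Pi.single_apply, *]

lemma pd_comp_reflHyp {f : (Fin N → ℝ) → ℝ} {lam : ℝ} {x : Fin N → ℝ}
    (hf : DifferentiableAt ℝ f (reflHyp N lam x)) (i : Fin N) :
    pd i (fun y => f (reflHyp N lam y)) x
      = (if i = 0 then -1 else 1) * pd i f (reflHyp N lam x) := by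
  have hchain := (hf.hasFDerivAt.comp x (hasFDerivAt_reflHyp lam x)).fderiv
  rw [pd, show (fun y => f (reflHyp N lam y)) = f ∘ reflHyp N lam from rfl, hchain,
    ContinuousLinearMap.comp_apply, reflCLM_single, map_smul, smul_eq_mul, pd]

lemma pd_pd_comp_reflHyp {f : (Fin N → ℝ) → ℝ} {lam : ℝ} {x : Fin N → ℝ}
    (hf : ContDiffAt ℝ 2 f (reflHyp N lam x)) (i : Fin N) :
    pd i (pd i (fun y => f (reflHyp N lam y))) x = pd i (pd i f) (reflHyp N lam x) := by
  have hreg : ∀ᶠ y in 𝓝 x, ContDiffAt ℝ 2 f (reflHyp N lam y) :=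
    (continuous_reflHyp lam).continuousAt.eventually (hf.eventually (by simp))
  have hpd : pd i (fun y => f (reflHyp N lam y))
      =ᶠ[𝓝 x] fun y => (if i = 0 then -1 else 1) * pd i f (reflHyp N lam y) := by
    filter_upwards [hreg] with y hy
    exact pd_comp_reflHyp (hy.differentiableAt two_ne_zero) i
  have hpd' := differentiableAt_pd hf i
  rw [hpd.pd_eq, pd_const_mul (f := fun y => pd i f (reflHyp N lam y)) _
    (hpd'.comp x (hasFDerivAt_reflHyp lam x).differentiableAt), pd_comp_reflHyp hpd', ← mul_assoc]
  split_ifs <;> norm_num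

lemma lapl_comp_reflHyp {f : (Fin N → ℝ) → ℝ} {lam : ℝ} {x : Fin N → ℝ}
    (hf : ContDiffAt ℝ 2 f (reflHyp N lam x)) :
    lapl (fun y => f (reflHyp N lam y)) x = lapl f (reflHyp N lam x) :=
  Finset.sum_congr rfl fun i _ => pd_pd_comp_reflHyp hf i

end Reflection

section ExtremumTests

lemma IsLocalMin.deriv_deriv_nonneg {f : ℝ → ℝ} {a : ℝ} (h : IsLocalMin f a)
    (hc : ContinuousAt f a) : 0 ≤ deriv (deriv f) a := by
  by_contra! hneg
  -- a local min that is also a local max makes `f` locally constant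
  have hconst : f =ᶠ[𝓝 a] fun _ => f a := by
    filter_upwards [h, isLocalMax_of_deriv_deriv_neg hneg h.deriv_eq_zero hc] with y hmin hmax
    exact le_antisymm hmax hmin
  have hderiv : deriv f =ᶠ[𝓝 a] fun _ => 0 := by
    filter_upwards [hconst.eventuallyEq_nhds] with y hy
    rw [hy.deriv_eq, deriv_const]
  rw [hderiv.deriv_eq, deriv_const] at hneg
  exact lt_irrefl 0 hneg

variable {N : ℕ}

lemma hasDerivAt_pd_line {f : (Fin N → ℝ) → ℝ} {x : Fin N → ℝ} {i : Fin N} {r : ℝ}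
    (hf : DifferentiableAt ℝ f (x + r • Pi.single i 1)) :
    HasDerivAt (fun r : ℝ => f (x + r • Pi.single i 1)) (pd i f (x + r • Pi.single i 1)) r :=
  hf.hasFDerivAt.comp_hasDerivAt r (by simpa using ((hasDerivAt_id r).smul_const _).const_add x)

lemma pd_pd_nonneg_of_isLocalMin {f : (Fin N → ℝ) → ℝ} {x : Fin N → ℝ}
    (hf : ContDiffAt ℝ 2 f x) (hmin : IsLocalMin f x) (i : Fin N) : 0 ≤ pd i (pd i f) x := by
  set line : ℝ → Fin N → ℝ := fun r => x + r • Pi.single i 1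
  have hlinec : Continuous line := by fun_prop
  have hline : Tendsto line (𝓝 0) (𝓝 x) := hlinec.tendsto' 0 x (by simp [line])
  have hderiv : deriv (f ∘ line) =ᶠ[𝓝 0] fun r => pd i f (line r) := by
    filter_upwards [hline.eventually (hf.eventually (by simp))] with r hr
    exact (hasDerivAt_pd_line (hr.differentiableAt two_ne_zero)).deriv
  have hsecond : deriv (deriv (f ∘ line)) 0 = pd i (pd i f) x := by
    rw [hderiv.deriv_eq]
    simpa [line] using (hasDerivAt_pd_line (r := 0) (by simpa using differentiableAt_pd hf i)).deriv
  rw [← hsecond]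
  refine IsLocalMin.deriv_deriv_nonneg ?_ ?_
  · exact IsLocalMin.comp_continuous (by simpa [line] using hmin) hlinec.continuousAt
  · exact hf.continuousAt.comp_of_eq hlinec.continuousAt (by simp [line])

lemma lapl_nonneg_of_isLocalMin {f : (Fin N → ℝ) → ℝ} {x : Fin N → ℝ}
    (hf : ContDiffAt ℝ 2 f x) (hmin : IsLocalMin f x) : 0 ≤ lapl f x :=
  Finset.sum_nonneg fun i _ => pd_pd_nonneg_of_isLocalMin hf hmin i

lemma HasDerivAt.nonpos_of_isMinOn_Icc {φ : ℝ → ℝ} {a b d : ℝ} (hφ : HasDerivAt φ d b)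
    (hab : a < b) (hmin : IsMinOn φ (Icc a b) b) : d ≤ 0 := by
  have hcone : a - b ∈ posTangentConeAt (Icc a b) b :=
    sub_mem_posTangentConeAt_of_segment_subset (by rw [segment_symm, segment_eq_Icc hab.le])
  have := hmin.localize.hasFDerivWithinAt_nonneg hφ.hasFDerivAt.hasFDerivWithinAt hcone
  rw [ContinuousLinearMap.toSpanSingleton_apply, smul_eq_mul] at this
  nlinarith

lemma deriv_le_mul_of_isMinOn_exp_mul {w : ℝ → ℝ} {γ a b : ℝ} (hw : DifferentiableAt ℝ w b)
    (hab : a < b) (hmin : IsMinOn (fun r => exp (-(γ * r)) * w r) (Icc a b) b) :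
    deriv w b ≤ γ * w b := by
  have hweight : HasDerivAt (fun r => exp (-(γ * r))) (exp (-(γ * b)) * -γ) b := by
    simpa using ((hasDerivAt_id b).const_mul γ).neg.exp
  have := (hweight.mul hw.hasDerivAt).nonpos_of_isMinOn_Icc hab hmin
  nlinarith [exp_pos (-(γ * b))]

end ExtremumTests

section Geometry

variable {N : ℕ} [NeZero N] {Ω : Set (Fin N → ℝ)}

lemma update_zero_mem_of_abs_le (hΩsym : reflHyp N 0 '' Ω = Ω)
    (hΩconv : ∀ x ∈ Ω, ∀ y ∈ Ω, (∀ i : Fin N, i ≠ 0 → x i = y i) → segment ℝ x y ⊆ Ω)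
    {u : Fin N → ℝ} (hu : u ∈ Ω) (hu0 : 0 < u 0) {c : ℝ} (hc : |c| ≤ u 0) :
    Function.update u 0 c ∈ Ω := by
  have hrefl : reflHyp N 0 u ∈ Ω := hΩsym ▸ mem_image_of_mem _ hu
  obtain ⟨hc₁, hc₂⟩ := abs_le.1 hc
  refine hΩconv _ hrefl u hu (fun i hi => reflHyp_apply_of_ne 0 u hi)
    ⟨(u 0 - c) / (2 * u 0), (u 0 + c) / (2 * u 0), div_nonneg (by linarith) (by linarith),
      div_nonneg (by linarith) (by linarith), by field_simp; ring, ?_⟩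
  funext j
  rcases eq_or_ne j 0 with rfl | hj
  · simp only [Pi.add_apply, Pi.smul_apply, smul_eq_mul, reflHyp_apply_zero,
      Function.update_self]
    field_simp
    ring
  · simp only [Pi.add_apply, Pi.smul_apply, smul_eq_mul, reflHyp_apply_of_ne _ _ hj,
      Function.update_of_ne hj]
    field_simp
    ring

lemma reflHyp_mem (hΩsym : reflHyp N 0 '' Ω = Ω)
    (hΩconv : ∀ x ∈ Ω, ∀ y ∈ Ω, (∀ i : Fin N, i ≠ 0 → x i = y i) → segment ℝ x y ⊆ Ω)
    {μ : ℝ} (hμ : 0 < μ) {x : Fin N → ℝ} (hx : x ∈ Ω) (hxμ : μ ≤ x 0) :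
    reflHyp N μ x ∈ Ω :=
  update_zero_mem_of_abs_le hΩsym hΩconv hx (hμ.trans_le hxμ)
    (abs_le.2 ⟨by linarith, by linarith⟩)

lemma reflHyp_mem_closure (hΩsym : reflHyp N 0 '' Ω = Ω)
    (hΩconv : ∀ x ∈ Ω, ∀ y ∈ Ω, (∀ i : Fin N, i ≠ 0 → x i = y i) → segment ℝ x y ⊆ Ω)
    {μ : ℝ} (hμ : 0 < μ) {x : Fin N → ℝ} (hx : x ∈ closure (capSet Ω μ)) :
    reflHyp N μ x ∈ closure Ω :=
  map_mem_closure (continuous_reflHyp μ) hx fun _ hy => reflHyp_mem hΩsym hΩconv hμ hy.1 hy.2.le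

lemma le_apply_zero_of_mem_closure_capSet {μ : ℝ} {x : Fin N → ℝ}
    (hx : x ∈ closure (capSet Ω μ)) : μ ≤ x 0 :=
  closure_minimal (fun _ hy => hy.2.le) (isClosed_le continuous_const (continuous_apply 0)) hx

lemma isOpen_capSet (hΩ : IsOpen Ω) (μ : ℝ) : IsOpen (capSet Ω μ) :=
  hΩ.inter (isOpen_lt continuous_const (continuous_apply 0))

lemma mem_capSet_of_reflected_sub_neg (hΩopen : IsOpen Ω) (hΩsym : reflHyp N 0 '' Ω = Ω)
    (hΩconv : ∀ x ∈ Ω, ∀ y ∈ Ω, (∀ i : Fin N, i ≠ 0 → x i = y i) → segment ℝ x y ⊆ Ω)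
    {u : (Fin N → ℝ) → ℝ} (hpos : ∀ x ∈ closure Ω, 0 ≤ u x) (hbc : ∀ x ∈ frontier Ω, u x = 0)
    {μ : ℝ} (hμ : 0 < μ) {x : Fin N → ℝ} (hx : x ∈ closure (capSet Ω μ))
    (hneg : u (reflHyp N μ x) - u x < 0) : x ∈ capSet Ω μ := by
  refine ⟨?_, (le_apply_zero_of_mem_closure_capSet hx).lt_of_ne ?_⟩
  · by_contra hxΩ
    have hfr : x ∈ frontier Ω := by
      rw [hΩopen.frontier_eq]
      exact ⟨closure_mono (sep_subset _ _) hx, hxΩ⟩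
    have := hpos _ (reflHyp_mem_closure hΩsym hΩconv hμ hx)
    rw [hbc x hfr] at hneg
    linarith
  · intro hxμ
    rw [reflHyp_eq_self hxμ.symm, sub_self] at hneg
    exact lt_irrefl 0 hneg

end Geometry

section MovingPlane

variable {N : ℕ} [NeZero N] {Ω : Set (Fin N → ℝ)}

def CapNonneg (Ω : Set (Fin N → ℝ)) (z : (Fin N → ℝ) → ℝ) (μ : ℝ) : Prop :=
  ∀ x ∈ capSet Ω μ, 0 ≤ z (reflHyp N μ x) - z x

lemma apply_zero_le_ellOf (hℓ : 0 < ellOf Ω) {x : Fin N → ℝ} (hx : x ∈ Ω) : x 0 ≤ ellOf Ω := by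
  refine le_csSup ?_ ⟨x, hx, rfl⟩
  by_contra hbdd
  rw [ellOf, Real.sSup_of_not_bddAbove hbdd] at hℓ
  exact lt_irrefl 0 hℓ

lemma bigLambda_le_of_capNonneg_imp {z z' : (Fin N → ℝ) → ℝ}
    (h : ∀ μ, 0 < μ → CapNonneg Ω z μ → CapNonneg Ω z' μ) :
    bigLambda Ω z' ≤ bigLambda Ω z := by
  by_cases hℓ : 0 < ellOf Ω
  · refine csInf_le_csInf ⟨0, fun _ hlam => hlam.1.1.le⟩ ⟨ellOf Ω, ⟨hℓ, le_rfl⟩, ?_⟩ ?_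
    · intro μ hμ x hx
      exact absurd (apply_zero_le_ellOf hℓ hx.1) (by linarith [hx.2])
    · rintro lam ⟨hlam, hz⟩
      exact ⟨hlam, fun μ hμ => h μ (hlam.1.trans hμ) (hz μ hμ)⟩
  · have hempty : ∀ z : (Fin N → ℝ) → ℝ, {lam | lam ∈ Ioc 0 (ellOf Ω) ∧
        ∀ μ : ℝ, lam < μ → ∀ x ∈ capSet Ω μ, 0 ≤ z (reflHyp N μ x) - z x} = ∅ :=
      fun _ => eq_empty_of_forall_notMem fun lam hlam => hℓ (hlam.1.1.trans_le hlam.1.2)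
    rw [bigLambda, bigLambda, hempty z, hempty z']

end MovingPlane

section Solution

variable {N : ℕ} [NeZero N] {Ω : Set (Fin N → ℝ)}

lemma pd_eq_update_of_isLocalMin {F : (Fin N → ℝ) → ℝ} {μ : ℝ} {x : Fin N → ℝ}
    (hF : DifferentiableAt ℝ F x) (hFP : DifferentiableAt ℝ F (reflHyp N μ x))
    (hmin : IsLocalMin (fun y => F (reflHyp N μ y) - F y) x) :
    (fun i => pd i F x) = Function.update (fun i => pd i F (reflHyp N μ x)) 0
      (-pd 0 F (reflHyp N μ x)) := by
  funext i
  have hcrit : pd i (fun y => F (reflHyp N μ y) - F y) x = 0 := by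
    rw [pd, hmin.fderiv_eq_zero]; rfl
  rw [pd_sub (f := fun y => F (reflHyp N μ y))
      (hFP.comp x (hasFDerivAt_reflHyp μ x).differentiableAt) hF,
    pd_comp_reflHyp hFP] at hcrit
  rcases eq_or_ne i 0 with rfl | hi
  · simp only [if_pos, Function.update_self] at hcrit ⊢
    linarith
  · simp only [hi, if_false, Function.update_of_ne hi] at hcrit ⊢
    linarith

lemma reflected_sub_deriv_ge_of_isLocalMin {β0 : ℝ} {g : ℝ → (Fin N → ℝ) → ℝ → (Fin N → ℝ) → ℝ}
    (hgsym : ∀ t x y u p, (∀ i : Fin N, i ≠ 0 → x i = y i) → g t x u p = g t y u p)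
    (hgeven : ∀ t x u (p : Fin N → ℝ), g t x u (Function.update p 0 (-(p 0))) = g t x u p)
    (hglip : ∀ t x u u' p p', |g t x u p - g t x u' p'| ≤ β0 * (|u - u'| + ‖p - p'‖))
    {U : (Fin N → ℝ) → ℝ → ℝ} {t μ : ℝ}
    (hUregx : ∀ x ∈ Ω, ContDiffAt ℝ 2 (fun y => U y t) x)
    (hUpde : ∀ x ∈ Ω, deriv (fun s => U x s) t
        = lapl (fun y => U y t) x + g t x (U x t) (fun i => pd i (fun y => U y t) x))
    {x : Fin N → ℝ} (hx : x ∈ Ω) (hPx : reflHyp N μ x ∈ Ω)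
    (hmin : IsLocalMin (fun y => U (reflHyp N μ y) t - U y t) x)
    (hneg : U (reflHyp N μ x) t - U x t ≤ 0) :
    β0 * (U (reflHyp N μ x) t - U x t)
      ≤ deriv (fun s => U (reflHyp N μ x) s) t - deriv (fun s => U x s) t := by
  set F : (Fin N → ℝ) → ℝ := fun y => U y t
  set q : Fin N → ℝ := fun i => pd i F (reflHyp N μ x)
  have hFx := hUregx x hx
  have hFPx := hUregx _ hPx
  have hFP : ContDiffAt ℝ 2 (fun y => F (reflHyp N μ y)) x :=
    hFPx.comp x (contDiff_reflHyp μ).contDiffAt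
  have hlap : 0 ≤ lapl F (reflHyp N μ x) - lapl F x := by
    rw [← lapl_comp_reflHyp hFPx, ← lapl_sub hFP hFx]
    exact lapl_nonneg_of_isLocalMin (hFP.sub hFx) hmin
  have hgrad : (fun i => pd i F x) = Function.update q 0 (-(q 0)) :=
    pd_eq_update_of_isLocalMin (hFx.differentiableAt two_ne_zero)
      (hFPx.differentiableAt two_ne_zero) hmin
  have hlip : β0 * (U (reflHyp N μ x) t - U x t)
      ≤ g t x (U (reflHyp N μ x) t) q - g t x (U x t) q := by
    have := hglip t x (U (reflHyp N μ x) t) (U x t) q q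
    rw [sub_self, norm_zero, add_zero, abs_of_nonpos hneg] at this
    linarith [neg_abs_le (g t x (U (reflHyp N μ x) t) q - g t x (U x t) q)]
  rw [hUpde _ hPx, hUpde x hx, hgsym t _ x _ q fun i hi => reflHyp_apply_of_ne μ x hi, hgrad,
    hgeven]
  linarith

end Solution

section MaximumPrinciple

variable {N : ℕ} [NeZero N] {Ω : Set (Fin N → ℝ)}

lemma continuousOn_reflected_sub (hΩsym : reflHyp N 0 '' Ω = Ω)
    (hΩconv : ∀ x ∈ Ω, ∀ y ∈ Ω, (∀ i : Fin N, i ≠ 0 → x i = y i) → segment ℝ x y ⊆ Ω)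
    {U : (Fin N → ℝ) → ℝ → ℝ}
    (hUcont : ContinuousOn (fun q : (Fin N → ℝ) × ℝ => U q.1 q.2) (closure Ω ×ˢ univ))
    {μ : ℝ} (hμ : 0 < μ) :
    ContinuousOn (fun q : (Fin N → ℝ) × ℝ => U (reflHyp N μ q.1) q.2 - U q.1 q.2)
      (closure (capSet Ω μ) ×ˢ univ) :=
  (hUcont.comp (((continuous_reflHyp μ).comp continuous_fst).prodMk continuous_snd).continuousOn
      fun _ hq => ⟨reflHyp_mem_closure hΩsym hΩconv hμ hq.1, mem_univ _⟩).sub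
    (hUcont.mono (prod_mono (closure_mono (sep_subset _ _)) le_rfl))

theorem capNonneg_of_capNonneg_of_le (hΩbd : Bornology.IsBounded Ω) (hΩopen : IsOpen Ω)
    (hΩsym : reflHyp N 0 '' Ω = Ω)
    (hΩconv : ∀ x ∈ Ω, ∀ y ∈ Ω, (∀ i : Fin N, i ≠ 0 → x i = y i) → segment ℝ x y ⊆ Ω)
    {β0 : ℝ} {g : ℝ → (Fin N → ℝ) → ℝ → (Fin N → ℝ) → ℝ}
    (hgsym : ∀ t x y u p, (∀ i : Fin N, i ≠ 0 → x i = y i) → g t x u p = g t y u p)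
    (hgeven : ∀ t x u (p : Fin N → ℝ), g t x u (Function.update p 0 (-(p 0))) = g t x u p)
    (hglip : ∀ t x u u' p p', |g t x u p - g t x u' p'| ≤ β0 * (|u - u'| + ‖p - p'‖))
    {U : (Fin N → ℝ) → ℝ → ℝ}
    (hUpos : ∀ x ∈ closure Ω, ∀ t : ℝ, 0 ≤ U x t)
    (hUcont : ContinuousOn (fun q : (Fin N → ℝ) × ℝ => U q.1 q.2) (closure Ω ×ˢ univ))
    (hUbc : ∀ x ∈ frontier Ω, ∀ t : ℝ, U x t = 0)
    (hUregt : ∀ x ∈ Ω, ∀ t : ℝ, DifferentiableAt ℝ (fun s => U x s) t)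
    (hUregx : ∀ t : ℝ, ∀ x ∈ Ω, ContDiffAt ℝ 2 (fun y => U y t) x)
    (hUpde : ∀ x ∈ Ω, ∀ t : ℝ,
      deriv (fun s => U x s) t
        = lapl (fun y => U y t) x + g t x (U x t) (fun i => pd i (fun y => U y t) x))
    {μ s t : ℝ} (hμ : 0 < μ) (hst : s ≤ t) (hs : CapNonneg Ω (fun x => U x s) μ) :
    CapNonneg Ω (fun x => U x t) μ := by
  intro x₁ hx₁
  by_contra! hx₁neg
  set w : (Fin N → ℝ) → ℝ → ℝ := fun x r => U (reflHyp N μ x) r - U x r with hw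
  set K := closure (capSet Ω μ)
  -- the exponent of the weight only has to exceed the Lipschitz constant `β0`
  set weight : ℝ → ℝ := fun r => exp (-((β0 + 1) * r))
  have hweight : ∀ r, 0 < weight r := fun r => exp_pos _
  have hK : IsCompact K := (hΩbd.subset (sep_subset _ _)).isCompact_closure
  have hcont : ContinuousOn (fun q : (Fin N → ℝ) × ℝ => weight q.2 * w q.1 q.2) (K ×ˢ Icc s t) :=
    (by fun_prop : Continuous fun q : (Fin N → ℝ) × ℝ => weight q.2).continuousOn.mul
      ((continuousOn_reflected_sub hΩsym hΩconv hUcont hμ).mono (prod_mono le_rfl (subset_univ _)))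
  obtain ⟨⟨x₀, t₀⟩, ⟨hx₀K, ht₀⟩, hmin⟩ :=
    (hK.prod isCompact_Icc).exists_isMinOn ⟨(x₁, t), subset_closure hx₁, hst, le_rfl⟩ hcont
  have hmin' : ∀ x ∈ K, ∀ r ∈ Icc s t, weight t₀ * w x₀ t₀ ≤ weight r * w x r :=
    fun x hx r hr => hmin (show (x, r) ∈ K ×ˢ Icc s t from ⟨hx, hr⟩)
  have hw₀ : w x₀ t₀ < 0 := by
    have h₁ := hmin' x₁ (subset_closure hx₁) t ⟨hst, le_rfl⟩
    have h₂ : weight t * w x₁ t < 0 := mul_neg_of_pos_of_neg (hweight t) hx₁neg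
    exact neg_of_mul_neg_right (h₁.trans_lt h₂) (hweight t₀).le
  have hx₀ : x₀ ∈ capSet Ω μ := mem_capSet_of_reflected_sub_neg hΩopen hΩsym hΩconv
    (fun x hx => hUpos x hx t₀) (fun x hx => hUbc x hx t₀) hμ hx₀K hw₀
  have hPx₀ : reflHyp N μ x₀ ∈ Ω := reflHyp_mem hΩsym hΩconv hμ hx₀.1 hx₀.2.le
  have hst₀ : s < t₀ := ht₀.1.lt_of_ne fun hs₀ => (hs x₀ hx₀).not_gt (hs₀ ▸ hw₀)
  have hspace : IsLocalMin (fun y => w y t₀) x₀ := by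
    filter_upwards [(isOpen_capSet hΩopen μ).mem_nhds hx₀] with y hy
    exact le_of_mul_le_mul_left (hmin' y (subset_closure hy) t₀ ht₀) (hweight t₀)
  have hdiff : DifferentiableAt ℝ (fun r => U (reflHyp N μ x₀) r) t₀ := hUregt _ hPx₀ t₀
  have hdiff' : DifferentiableAt ℝ (fun r => U x₀ r) t₀ := hUregt _ hx₀.1 t₀
  have htime : deriv (w x₀) t₀ ≤ (β0 + 1) * w x₀ t₀ :=
    deriv_le_mul_of_isMinOn_exp_mul (hdiff.sub hdiff') hst₀
      fun r hr => hmin' x₀ hx₀K r ⟨hr.1, hr.2.trans ht₀.2⟩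
  have hpde : β0 * w x₀ t₀ ≤ deriv (w x₀) t₀ := by
    rw [hw, deriv_fun_sub hdiff hdiff']
    exact reflected_sub_deriv_ge_of_isLocalMin hgsym hgeven hglip (hUregx t₀)
      (fun x hx => hUpde x hx t₀) hx₀.1 hPx₀ hspace hw₀.le
  linarith

end MaximumPrinciple

theorem bigLambda_antitone_along_entire_solution_general (N : ℕ) [NeZero N] (Ω : Set (Fin N → ℝ))
    (hΩbd : Bornology.IsBounded Ω) (hΩopen : IsOpen Ω)
    (hΩsym : reflHyp N 0 '' Ω = Ω)
    (hΩconv : ∀ x ∈ Ω, ∀ y ∈ Ω, (∀ i : Fin N, i ≠ 0 → x i = y i) → segment ℝ x y ⊆ Ω)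
    (β0 : ℝ)
    (g : ℝ → (Fin N → ℝ) → ℝ → (Fin N → ℝ) → ℝ)
    (hgsym : ∀ t x y u p, (∀ i : Fin N, i ≠ 0 → x i = y i) → g t x u p = g t y u p)
    (hgeven : ∀ t x u (p : Fin N → ℝ), g t x u (Function.update p 0 (-(p 0))) = g t x u p)
    (hglip : ∀ t x u u' p p', |g t x u p - g t x u' p'| ≤ β0 * (|u - u'| + ‖p - p'‖))
    (U : (Fin N → ℝ) → ℝ → ℝ)
    (hUpos : ∀ x ∈ closure Ω, ∀ t : ℝ, 0 ≤ U x t)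
    (hUcont : ContinuousOn (fun q : (Fin N → ℝ) × ℝ => U q.1 q.2) (closure Ω ×ˢ univ))
    (hUbc : ∀ x ∈ frontier Ω, ∀ t : ℝ, U x t = 0)
    (hUregt : ∀ x ∈ Ω, ∀ t : ℝ, DifferentiableAt ℝ (fun s => U x s) t)
    (hUregx : ∀ t : ℝ, ∀ x ∈ Ω, ContDiffAt ℝ 2 (fun y => U y t) x)
    (hUpde : ∀ x ∈ Ω, ∀ t : ℝ,
      deriv (fun s => U x s) t
        = lapl (fun y => U y t) x + g t x (U x t) (fun i => pd i (fun y => U y t) x))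
    :
    ∀ s t : ℝ, s ≤ t → bigLambda Ω (fun x => U x t) ≤ bigLambda Ω (fun x => U x s) :=
  fun _ _ hst => bigLambda_le_of_capNonneg_imp fun _ hμ hs =>
    capNonneg_of_capNonneg_of_le hΩbd hΩopen hΩsym hΩconv hgsym hgeven hglip hUpos hUcont hUbc
      hUregt hUregx hUpde hμ hst hs

/-- Lemma 4.2: along any bounded nonnegative entire solution of the symmetric parabolic
problem, the moving-plane functional `t ↦ Λ(U(·, t))` is nonincreasing. -/
theorem bigLambda_antitone_along_entire_solution (N : ℕ) [NeZero N] (Ω : Set (Fin N → ℝ))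
    (hΩbd : Bornology.IsBounded Ω) (hΩopen : IsOpen Ω) (hΩconn : IsConnected Ω)
    (hΩsym : reflHyp N 0 '' Ω = Ω)
    (hΩconv : ∀ x ∈ Ω, ∀ y ∈ Ω, (∀ i : Fin N, i ≠ 0 → x i = y i) → segment ℝ x y ⊆ Ω)
    -- condition (A): exterior measure-density condition at the boundary
    (hΩA : ∃ ς ∈ Ioo (0:ℝ) 1, ∃ R : ℝ, 0 < R ∧ ∀ x ∈ frontier Ω, ∀ ρ ∈ Ioo (0:ℝ) R,
      volume (Ω ∩ Metric.ball x ρ) ≤ ENNReal.ofReal ς * volume (Metric.ball x ρ))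
    (β0 : ℝ) (hβ0 : 0 < β0)
    (g : ℝ → (Fin N → ℝ) → ℝ → (Fin N → ℝ) → ℝ)
    (hgsym : ∀ t x y u p, (∀ i : Fin N, i ≠ 0 → x i = y i) → g t x u p = g t y u p)
    (hgeven : ∀ t x u (p : Fin N → ℝ), g t x u (Function.update p 0 (-(p 0))) = g t x u p)
    (hglip : ∀ t x u u' p p', |g t x u p - g t x u' p'| ≤ β0 * (|u - u'| + ‖p - p'‖))
    (U : (Fin N → ℝ) → ℝ → ℝ)
    (hUbd : ∃ M : ℝ, ∀ x t, |U x t| ≤ M)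
    (hUpos : ∀ x ∈ closure Ω, ∀ t : ℝ, 0 ≤ U x t)
    (hUcont : ContinuousOn (fun q : (Fin N → ℝ) × ℝ => U q.1 q.2) (closure Ω ×ˢ univ))
    (hUbc : ∀ x ∈ frontier Ω, ∀ t : ℝ, U x t = 0)
    (hUregt : ∀ x ∈ Ω, ∀ t : ℝ, DifferentiableAt ℝ (fun s => U x s) t)
    (hUregx : ∀ t : ℝ, ∀ x ∈ Ω, ContDiffAt ℝ 2 (fun y => U y t) x)
    (hUpde : ∀ x ∈ Ω, ∀ t : ℝ,
      deriv (fun s => U x s) t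
        = lapl (fun y => U y t) x + g t x (U x t) (fun i => pd i (fun y => U y t) x))
    :
    ∀ s t : ℝ, s ≤ t → bigLambda Ω (fun x => U x t) ≤ bigLambda Ω (fun x => U x s) :=
  bigLambda_antitone_along_entire_solution_general N Ω hΩbd hΩopen hΩsym hΩconv β0 g hgsym hgeven
    hglip U hUpos hUcont hUbc hUregt hUregx hUpde
end
end

section
/- (Lemma 5.1, semicontinuity of Λ on E_0 vs E_+.) Let E be the set of equilibria of the autonomous problem and E_+ = {z ∈ E : Λ(z) > 0}, E_0 = {z ∈ E : Λ(z) = 0}. Then for each z ∈ E_+, the distance in the supremum norm from z to E_0 is strictly positive: dist_{C_0(cl Ω)}(z, E_0) > 0. -/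
/-!
`Λ(w) = 0` says that `w (P_μ x) ≥ w x` on every cap `Ω_μ` with `μ > 0`, whereas `Λ(z) > 0`
yields such a cap and a point `x` in it with `z (P_μ x) < z x`. By symmetry and convexity in
`x 0`, both `x` and `P_μ x` lie in `Ω`, so no such `w` is uniformly within half of that drop
of `z`.
-/

open Set Filter MeasureTheory Real

noncomputable section

/-- `z` is a nonnegative equilibrium of `0 = Δz + f(x, z, ∇z)` in `Ω`, `z = 0` on `∂Ω`. -/
def IsEquilibrium {N : ℕ} [NeZero N] (Ω : Set (Fin N → ℝ))
    (f : (Fin N → ℝ) → ℝ → (Fin N → ℝ) → ℝ) (z : (Fin N → ℝ) → ℝ) : Prop :=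
  ContinuousOn z (closure Ω) ∧ (∀ x ∈ frontier Ω, z x = 0) ∧
    (∀ x ∈ closure Ω, 0 ≤ z x) ∧ (∀ x ∈ Ω, ContDiffAt ℝ 2 z x) ∧
    ∀ x ∈ Ω, lapl z x + f x (z x) (fun i => pd i z x) = 0

-- `P_μ x` lies on the segment from `x` to `P_0 x`.
theorem reflHyp_mem_of_mem_capSet {N : ℕ} [NeZero N] {Ω : Set (Fin N → ℝ)}
    (hsym : MapsTo (reflHyp N 0) Ω Ω)
    (hconv : ∀ x ∈ Ω, ∀ y ∈ Ω, (∀ i : Fin N, i ≠ 0 → x i = y i) → segment ℝ x y ⊆ Ω)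
    {μ : ℝ} (hμ : 0 ≤ μ) {x : Fin N → ℝ} (hx : x ∈ capSet Ω μ) :
    reflHyp N μ x ∈ Ω := by
  obtain ⟨hxΩ, hμx⟩ := hx
  have hx0 : 0 < x 0 := hμ.trans_lt hμx
  refine hconv x hxΩ _ (hsym hxΩ) (fun i hi => by simp [reflHyp, hi]) ?_
  refine ⟨μ / x 0, 1 - μ / x 0, div_nonneg hμ hx0.le,
    sub_nonneg.2 ((div_le_one hx0).2 hμx.le), by ring, funext fun i => ?_⟩
  rcases eq_or_ne i 0 with rfl | hi
  · simp only [reflHyp, Pi.add_apply, Pi.smul_apply, smul_eq_mul, Function.update_self]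
    field_simp
    ring
  · simp only [reflHyp, Pi.add_apply, Pi.smul_apply, smul_eq_mul, Function.update_of_ne hi]
    ring

section bigLambda

variable {N : ℕ} [NeZero N] {Ω : Set (Fin N → ℝ)} {z : (Fin N → ℝ) → ℝ}

def admissibleLambdas (Ω : Set (Fin N → ℝ)) (z : (Fin N → ℝ) → ℝ) : Set ℝ :=
  {lam | lam ∈ Ioc 0 (ellOf Ω) ∧
    ∀ μ : ℝ, lam < μ → ∀ x ∈ capSet Ω μ, 0 ≤ z (reflHyp N μ x) - z x}

theorem bigLambda_eq_sInf : bigLambda Ω z = sInf (admissibleLambdas Ω z) := rfl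

theorem bddBelow_admissibleLambdas : BddBelow (admissibleLambdas Ω z) :=
  ⟨0, fun _ hlam => hlam.1.1.le⟩

theorem exists_reflHyp_lt_of_bigLambda_pos (hz : 0 < bigLambda Ω z) :
    ∃ μ, 0 < μ ∧ ∃ x ∈ capSet Ω μ, z (reflHyp N μ x) < z x := by
  -- `sInf ∅ = 0`, so a positive `Λ(z)` is the infimum of a nonempty set
  obtain ⟨lam, hlam⟩ : (admissibleLambdas Ω z).Nonempty := by
    by_contra! hempty
    rw [bigLambda_eq_sInf, hempty, Real.sInf_empty] at hz
    exact hz.false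
  have hhalf : bigLambda Ω z / 2 ∉ admissibleLambdas Ω z :=
    notMem_of_lt_csInf (half_lt_self hz) bddBelow_admissibleLambdas
  have hle : bigLambda Ω z ≤ lam := csInf_le bddBelow_admissibleLambdas hlam
  simp only [admissibleLambdas, mem_ofPred_eq, not_and, not_forall, not_le, sub_neg] at hhalf
  obtain ⟨μ, hμ, x, hx, hlt⟩ := hhalf ⟨half_pos hz, by linarith [hlam.1.2]⟩
  exact ⟨μ, by linarith, x, hx, hlt⟩

theorem le_reflHyp_of_bigLambda_eq_zero (hΩ : BddAbove ((fun x => x 0) '' Ω))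
    (hz : bigLambda Ω z = 0) {μ : ℝ} (hμ : 0 < μ) {x : Fin N → ℝ} (hx : x ∈ capSet Ω μ) :
    z x ≤ z (reflHyp N μ x) := by
  have hle : ∀ y ∈ Ω, y 0 ≤ ellOf Ω := fun y hy => le_csSup hΩ ⟨y, hy, rfl⟩
  have hℓ : ellOf Ω ∈ admissibleLambdas Ω z :=
    ⟨⟨hμ.trans (hx.2.trans_le (hle x hx.1)), le_rfl⟩,
      fun ν hν y hy => absurd ((hle y hy.1).trans_lt hν) hy.2.not_gt⟩
  have hlt : sInf (admissibleLambdas Ω z) < μ := by rwa [← bigLambda_eq_sInf, hz]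
  obtain ⟨lam, hlam, hlamμ⟩ := (csInf_lt_iff bddBelow_admissibleLambdas ⟨_, hℓ⟩).1 hlt
  exact sub_nonneg.1 (hlam.2 μ hlamμ x hx)

end bigLambda

theorem equilibrium_positive_distance_from_E0_general (N : ℕ) [NeZero N] (Ω : Set (Fin N → ℝ))
    (hΩbd : Bornology.IsBounded Ω)
    (hΩsym : reflHyp N 0 '' Ω = Ω)
    (hΩconv : ∀ x ∈ Ω, ∀ y ∈ Ω, (∀ i : Fin N, i ≠ 0 → x i = y i) → segment ℝ x y ⊆ Ω)
    (f : (Fin N → ℝ) → ℝ → (Fin N → ℝ) → ℝ)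
    (z : (Fin N → ℝ) → ℝ) (hzpos : 0 < bigLambda Ω z) :
    ∃ ε : ℝ, 0 < ε ∧ ∀ w : (Fin N → ℝ) → ℝ, IsEquilibrium Ω f w → bigLambda Ω w = 0 →
      ∃ x ∈ closure Ω, ε ≤ |z x - w x| := by
  have hΩ : BddAbove ((fun x => x 0) '' Ω) :=
    ((LipschitzWith.eval 0).isBounded_image hΩbd).bddAbove
  obtain ⟨μ, hμ, x, hx, hzx⟩ := exists_reflHyp_lt_of_bigLambda_pos hzpos
  have hx' : reflHyp N μ x ∈ Ω :=
    reflHyp_mem_of_mem_capSet (mapsTo_iff_image_subset.2 hΩsym.subset) hΩconv hμ.le hx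
  refine ⟨(z x - z (reflHyp N μ x)) / 2, by linarith, fun w _ hw => ?_⟩
  have hwx := le_reflHyp_of_bigLambda_eq_zero hΩ hw hμ hx
  by_contra! hclose
  have h₁ := abs_lt.1 (hclose x (subset_closure hx.1))
  have h₂ := abs_lt.1 (hclose _ (subset_closure hx'))
  linarith [h₁.2, h₂.1]

/-- Lemma 5.1 (separation of `E₊` from `E₀`): every equilibrium with `Λ(z) > 0` is at
positive supremum distance from the set of equilibria with `Λ = 0`. -/
theorem equilibrium_positive_distance_from_E0 (N : ℕ) [NeZero N] (Ω : Set (Fin N → ℝ))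
    (hΩbd : Bornology.IsBounded Ω) (hΩopen : IsOpen Ω) (hΩconn : IsConnected Ω)
    (hΩsym : reflHyp N 0 '' Ω = Ω)
    (hΩconv : ∀ x ∈ Ω, ∀ y ∈ Ω, (∀ i : Fin N, i ≠ 0 → x i = y i) → segment ℝ x y ⊆ Ω)
    -- condition (D2): each cap has only finitely many connected components
    (hΩD2 : ∀ lam : ℝ, 0 < lam →
      {D : Set (Fin N → ℝ) | ∃ x ∈ capSet Ω lam, D = connectedComponentIn (capSet Ω lam) x}.Finite)
    -- condition (A)
    (hΩA : ∃ ς ∈ Ioo (0:ℝ) 1, ∃ R : ℝ, 0 < R ∧ ∀ x ∈ frontier Ω, ∀ ρ ∈ Ioo (0:ℝ) R,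
      volume (Ω ∩ Metric.ball x ρ) ≤ ENNReal.ofReal ς * volume (Metric.ball x ρ))
    (β0 : ℝ) (hβ0 : 0 < β0)
    (f : (Fin N → ℝ) → ℝ → (Fin N → ℝ) → ℝ)
    (hfcont : Continuous fun q : (Fin N → ℝ) × ℝ × (Fin N → ℝ) => f q.1 q.2.1 q.2.2)
    (hflip : ∀ x u u' p p', |f x u p - f x u' p'| ≤ β0 * (|u - u'| + ‖p - p'‖))
    (hfsym : ∀ x y u p, (∀ i : Fin N, i ≠ 0 → x i = y i) → f x u p = f y u p)
    (hfeven : ∀ x u (p : Fin N → ℝ), f x u (Function.update p 0 (-(p 0))) = f x u p)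
    (z : (Fin N → ℝ) → ℝ) (hz : IsEquilibrium Ω f z) (hzpos : 0 < bigLambda Ω z) :
    ∃ ε : ℝ, 0 < ε ∧ ∀ w : (Fin N → ℝ) → ℝ, IsEquilibrium Ω f w → bigLambda Ω w = 0 →
      ∃ x ∈ closure Ω, ε ≤ |z x - w x| :=
  equilibrium_positive_distance_from_E0_general N Ω hΩbd hΩsym hΩconv f z hzpos
end
end

section
/- (Lemma 6.2, chain transitivity of the ω-limit set.) Let (X, d) be a compact metric space carrying a flow S = (S_t)_{t∈ℝ} (S_0 = id, S_{t+s} = S_t ∘ S_s, each S_t continuous), and suppose X = ω(u) is the ω-limit set of a trajectory u : (0, ∞) → Y in an ambient metric space Y with dist(u(t), X) → 0, and suppose the flow on X is shadowed by u in the sense that the difference of a flow trajectory started at a point of X and the trajectory u started nearby grows by at most a fixed factor C_0 over time intervals of length ≤ 2T, up to an error that tends to 0 along u. Then X is chain transitive under S: for any φ, ψ ∈ X and any ε > 0, T > 0 there exist k ≥ 1, times t_1, …, t_k ≥ T and points φ_0 = φ, φ_1, …, φ_k = ψ in X with d(S_{t_{i+1}} φ_i, φ_{i+1}) < ε for 0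 ≤ i < k. -/
/-!
Fix δ with (2 C₀ + 1) δ < ε. Pick times s < s' beyond which η < δ and u stays δ-close to X,
with u(s) δ-close to φ and u(s') δ-close to ψ, and split [s, s'] into k ≥ 1 steps of equal
length τ ∈ [T, 2T]. The chain starts at φ, ends at ψ, and in between consists of points of X
δ-close to the sampled values u(s + jτ). One shadowing estimate over a step of length τ,
followed by the triangle inequality, shows that each link has error < (2 C₀ + 1) δ < ε.
-/

open Set Filter Metric

lemma exists_equal_steps_of_le {T r : ℝ} (hT : 0 < T) (hTr : T ≤ r) :
    ∃ k : ℕ, 1 ≤ k ∧ ∃ τ : ℝ, T ≤ τ ∧ τ ≤ 2 * T ∧ k * τ = r := by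
  set k := ⌊r / T⌋₊
  have hk : 1 ≤ k := (Nat.one_le_floor_iff _).mpr ((one_le_div hT).mpr hTr)
  have hk' : (1 : ℝ) ≤ k := by exact_mod_cast hk
  have hkT : k * T ≤ r := (le_div_iff₀ hT).mp (Nat.floor_le (div_pos (by linarith) hT).le)
  have hrk : r < (k + 1) * T := (div_lt_iff₀ hT).mp (Nat.lt_floor_add_one _)
  have hk0 : (0 : ℝ) < k := by linarith
  exact ⟨k, hk, r / k, (le_div_iff₀ hk0).mpr (by linarith),
    (div_le_iff₀ hk0).mpr (by nlinarith), mul_div_cancel₀ r hk0.ne'⟩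

lemma exists_fin_path_in_near_of_infDist_lt {Y : Type*} [PseudoMetricSpace Y] {X : Set Y}
    {k : ℕ} (hk : 0 < k) {v : Fin (k + 1) → Y} {δ : ℝ} {φ ψ : Y} (hφ : φ ∈ X) (hψ : ψ ∈ X)
    (hφv : dist φ (v 0) < δ) (hψv : dist ψ (v (Fin.last k)) < δ)
    (hv : ∀ j, infDist (v j) X < δ) :
    ∃ pts : Fin (k + 1) → Y, (∀ j, pts j ∈ X) ∧ pts 0 = φ ∧ pts (Fin.last k) = ψ ∧
      ∀ j, dist (pts j) (v j) < δ := by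
  choose q hqX hq using fun j => (infDist_lt_iff ⟨φ, hφ⟩).mp (hv j)
  have h0 : (0 : Fin (k + 1)) ≠ Fin.last k := by simp [Fin.ext_iff, hk.ne]
  refine ⟨fun j => if j = 0 then φ else if j = Fin.last k then ψ else q j,
    fun j => ?_, by simp, by simp [h0.symm], fun j => ?_⟩
  · dsimp only
    split_ifs
    exacts [hφ, hψ, hqX j]
  · dsimp only
    split_ifs with hj0 hjk
    · exact hj0 ▸ hφv
    · exact hjk ▸ hψv
    · exact dist_comm (v j) _ ▸ hq j

lemma dist_lt_of_shadow {Y : Type*} [PseudoMetricSpace Y] {a b c w w' : Y} {C e δ : ℝ}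
    (hC : 0 ≤ C) (hshadow : dist a w' ≤ C * (dist b w + e))
    (hb : dist b w < δ) (he : e < δ) (hc : dist c w' < δ) :
    dist a c < C * (δ + δ) + δ :=
  calc dist a c ≤ dist a w' + dist c w' := dist_triangle_right _ _ _
    _ < C * (δ + δ) + δ :=
      add_lt_add_of_le_of_lt
        (hshadow.trans (mul_le_mul_of_nonneg_left (by linarith) hC)) hc

theorem omega_limit_chain_transitive_general {Y : Type*} [MetricSpace Y]
    (X : Set Y)
    (S : ℝ → Y → Y)
    (u : ℝ → Y)
    -- X attracts the trajectory u
    (hattr : Tendsto (fun t => infDist (u t) X) atTop (nhds 0))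
    -- every point of X is a limit point of the trajectory
    (hlimit : ∀ z ∈ X, ∀ ε > (0:ℝ), ∀ T : ℝ, ∃ s ≥ T, dist (u s) z < ε)
    -- the flow on X is shadowed by u up to an error tending to 0
    (hshadow : ∀ T > (0:ℝ), ∃ C0 > (0:ℝ), ∃ η : ℝ → ℝ,
      Tendsto η atTop (nhds 0) ∧
      ∀ z ∈ X, ∀ s t : ℝ, 0 ≤ t → t ≤ 2 * T →
        dist (S t z) (u (s + t)) ≤ C0 * (dist z (u s) + η s)) :
    -- chain transitivity of X under S
    ∀ φ ∈ X, ∀ ψ ∈ X, ∀ ε > (0:ℝ), ∀ T > (0:ℝ),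
      ∃ k : ℕ, 1 ≤ k ∧ ∃ ts : Fin k → ℝ, ∃ pts : Fin (k + 1) → Y,
        (∀ i, T ≤ ts i) ∧ (∀ i, pts i ∈ X) ∧
        pts 0 = φ ∧ pts (Fin.last k) = ψ ∧
        ∀ i : Fin k, dist (S (ts i) (pts i.castSucc)) (pts i.succ) < ε := by
  intro φ hφ ψ hψ ε hε T hT
  obtain ⟨C0, hC0, η, hη, hshad⟩ := hshadow T hT
  set δ := ε / (2 * C0 + 2)
  have hδ : 0 < δ := by positivity
  have hδε : C0 * (δ + δ) + δ < ε := by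
    have : (2 * C0 + 2) * δ = ε := mul_div_cancel₀ ε (by positivity)
    linarith
  obtain ⟨s₀, hs₀⟩ := eventually_atTop.mp
    ((hη.eventually_lt_const hδ).and (hattr.eventually_lt_const hδ))
  obtain ⟨s, hs₀s, hφs⟩ := hlimit φ hφ δ hδ s₀
  obtain ⟨s', hss', hψs'⟩ := hlimit ψ hψ δ hδ (s + T)
  obtain ⟨k, hk, τ, hTτ, hτ2T, hkτ⟩ := exists_equal_steps_of_le hT (by linarith : T ≤ s' - s)
  have hsample (j : ℕ) : s₀ ≤ s + j * τ := by
    have : 0 ≤ (j : ℝ) * τ := mul_nonneg j.cast_nonneg (by linarith)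
    linarith
  obtain ⟨pts, hX, h0, hlast, hclose⟩ :=
    exists_fin_path_in_near_of_infDist_lt (v := fun j => u (s + (j : ℕ) * τ)) hk hφ hψ
      (by simpa [dist_comm] using hφs)
      (by simpa [hkτ, dist_comm] using hψs')
      (fun j => (hs₀ _ (hsample j)).2)
  refine ⟨k, hk, fun _ => τ, pts, fun _ => hTτ, hX, h0, hlast, fun i => ?_⟩
  have hnext : s + ((i.succ : ℕ) : ℝ) * τ = s + (i : ℕ) * τ + τ := by
    simp only [Fin.val_succ, Nat.cast_succ]
    ring
  refine (dist_lt_of_shadow hC0.le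
    (hshad _ (hX i.castSucc) (s + (i : ℕ) * τ) τ (by linarith) hτ2T)
    (hclose i.castSucc) (hs₀ _ (hsample i)).1 ?_).trans hδε
  simpa only [hnext] using hclose i.succ

/-- Lemma 6.2 (abstract version): a compact ω-limit set shadowed by the trajectory is chain
transitive under the induced flow. -/
theorem omega_limit_chain_transitive {Y : Type*} [MetricSpace Y]
    (X : Set Y) (hXcomp : IsCompact X) (hXne : X.Nonempty)
    (S : ℝ → Y → Y)
    (hS0 : ∀ z ∈ X, S 0 z = z)
    (hSinv : ∀ t : ℝ, ∀ z ∈ X, S t z ∈ X)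
    (hSgrp : ∀ s t : ℝ, ∀ z ∈ X, S (t + s) z = S t (S s z))
    (hScont : ∀ t : ℝ, ContinuousOn (S t) X)
    (u : ℝ → Y)
    -- X attracts the trajectory u
    (hattr : Tendsto (fun t => infDist (u t) X) atTop (nhds 0))
    -- every point of X is a limit point of the trajectory
    (hlimit : ∀ z ∈ X, ∀ ε > (0:ℝ), ∀ T : ℝ, ∃ s ≥ T, dist (u s) z < ε)
    -- the flow on X is shadowed by u up to an error tending to 0
    (hshadow : ∀ T > (0:ℝ), ∃ C0 > (0:ℝ), ∃ η : ℝ → ℝ,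
      Tendsto η atTop (nhds 0) ∧
      ∀ z ∈ X, ∀ s t : ℝ, 0 ≤ t → t ≤ 2 * T →
        dist (S t z) (u (s + t)) ≤ C0 * (dist z (u s) + η s)) :
    -- chain transitivity of X under S
    ∀ φ ∈ X, ∀ ψ ∈ X, ∀ ε > (0:ℝ), ∀ T > (0:ℝ),
      ∃ k : ℕ, 1 ≤ k ∧ ∃ ts : Fin k → ℝ, ∃ pts : Fin (k + 1) → Y,
        (∀ i, T ≤ ts i) ∧ (∀ i, pts i ∈ X) ∧
        pts 0 = φ ∧ pts (Fin.last k) = ψ ∧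
        ∀ i : Fin k, dist (S (ts i) (pts i.castSucc)) (pts i.succ) < ε :=
  omega_limit_chain_transitive_general X S u hattr hlimit hshadow
end
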